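/- arXiv:1906.04540 — 7 statements merged into one kernel-verified Lean document; each statement's English description precedes it below -/
import Mathlib

section
/- Let ℓ(z) = ln(1+e^z) be the logistic loss and define ψ(ξ) := ℓ^{-1}(∑_{i=1}^n ℓ(ξ_i)) for ξ ∈ ℝⁿ. If ψ(ξ) ≤ 0 (equivalently ∑_i ℓ(ξ_i) ≤ ℓ(0) = ln 2), then the gradient q = ∇ψ(ξ), with coordinates q_i = ℓ'(ξ_i)/ℓ'(ψ(ξ)), satisfies 1 ≤ ‖q‖₁ ≤ 2. -/
/-!
Write `Lᵢ = ℓ(ξᵢ) > 0` and `S = ∑ᵢ Lᵢ`, so `qᵢ = (1 - e^{-Lᵢ}) / (1 - e^{-S}) ≥ 0`.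
The map `x ↦ 1 - e^{-x}` is subadditive on `[0, ∞)`, since
`(1 - e^{-x}) + (1 - e^{-y}) - (1 - e^{-(x+y)}) = (1 - e^{-x})(1 - e^{-y})`; this gives `‖q‖₁ ≥ 1`.
Conversely `1 - e^{-x} ≤ x` termwise and `S / 2 ≤ 1 - e^{-S}` because `S ≤ ln 2 ≤ 1`,
which gives `‖q‖₁ ≤ 2`.
-/

open Finset Real

lemma one_sub_exp_neg_nonneg {x : ℝ} (hx : 0 ≤ x) : 0 ≤ 1 - exp (-x) :=
  sub_nonneg.mpr (exp_le_one_iff.mpr (neg_nonpos.mpr hx))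

lemma one_sub_exp_neg_add_le {x y : ℝ} (hx : 0 ≤ x) (hy : 0 ≤ y) :
    1 - exp (-(x + y)) ≤ (1 - exp (-x)) + (1 - exp (-y)) := by
  rw [neg_add, exp_add]
  nlinarith [mul_nonneg (one_sub_exp_neg_nonneg hx) (one_sub_exp_neg_nonneg hy)]

lemma one_sub_exp_neg_sum_le {ι : Type*} (s : Finset ι) (x : ι → ℝ) (hx : ∀ i ∈ s, 0 ≤ x i) :
    1 - exp (-∑ i ∈ s, x i) ≤ ∑ i ∈ s, (1 - exp (-x i)) :=
  le_sum_of_subadditive_on_pred (fun t => 1 - exp (-t)) (0 ≤ ·) (by simp)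
    (fun _ _ => one_sub_exp_neg_add_le) (fun _ _ => add_nonneg) x hx

lemma one_sub_exp_neg_le (x : ℝ) : 1 - exp (-x) ≤ x := by
  linarith [add_one_le_exp (-x)]

lemma half_le_one_sub_exp_neg {x : ℝ} (hx₀ : 0 ≤ x) (hx₁ : x ≤ 1) : x / 2 ≤ 1 - exp (-x) := by
  have hexp : exp (-x) * exp x = 1 := by rw [← exp_add, neg_add_cancel, exp_zero]
  nlinarith [add_one_le_exp x, exp_pos (-x)]

lemma sum_one_sub_exp_neg_div_mem_Icc {ι : Type*} (s : Finset ι) (x : ι → ℝ)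
    (hx : ∀ i ∈ s, 0 ≤ x i) (hpos : 0 < ∑ i ∈ s, x i) (hle : ∑ i ∈ s, x i ≤ 1) :
    ∑ i ∈ s, (1 - exp (-x i)) / (1 - exp (-∑ j ∈ s, x j)) ∈ Set.Icc 1 2 := by
  have hden : 0 < 1 - exp (-∑ j ∈ s, x j) :=
    sub_pos.mpr (exp_lt_one_iff.mpr (neg_lt_zero.mpr hpos))
  rw [← sum_div, Set.mem_Icc, one_le_div hden, div_le_iff₀ hden]
  refine ⟨one_sub_exp_neg_sum_le s x hx, ?_⟩
  calc ∑ i ∈ s, (1 - exp (-x i)) ≤ ∑ i ∈ s, x i := sum_le_sum fun i _ => one_sub_exp_neg_le (x i)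
    _ ≤ 2 * (1 - exp (-∑ j ∈ s, x j)) := by
      linarith [half_le_one_sub_exp_neg hpos.le hle]

/-- For the logistic loss `ℓ(z) = ln(1+e^z)` and the smoothed margin
`ψ(ξ) = ℓ⁻¹(∑ᵢ ℓ(ξᵢ))`, if `ψ(ξ) ≤ 0` (equivalently `∑ᵢ ℓ(ξᵢ) ≤ ℓ(0) = ln 2`),
then the gradient `q = ∇ψ(ξ)`, with `qᵢ = (1 − e^{−ℓ(ξᵢ)}) / (1 − e^{−∑ⱼ ℓ(ξⱼ)})`,
satisfies `1 ≤ ‖q‖₁ ≤ 2`. -/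
theorem stmt_4 {n : ℕ} (hn : 0 < n) (ξ : Fin n → ℝ)
    (hsub : ∑ i, Real.log (1 + Real.exp (ξ i)) ≤ Real.log 2)
    (q : Fin n → ℝ)
    (hq : ∀ i, q i = (1 - Real.exp (-(Real.log (1 + Real.exp (ξ i))))) /
        (1 - Real.exp (-(∑ j, Real.log (1 + Real.exp (ξ j)))))) :
    1 ≤ ∑ i, |q i| ∧ ∑ i, |q i| ≤ 2 := by
  set L : Fin n → ℝ := fun i => log (1 + exp (ξ i))
  have hL : ∀ i, 0 < L i := fun i => log_pos (by linarith [exp_pos (ξ i)])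
  have hq_nonneg : ∀ i, 0 ≤ q i := fun i => by
    rw [hq i]
    exact div_nonneg (one_sub_exp_neg_nonneg (hL i).le)
      (one_sub_exp_neg_nonneg (sum_nonneg fun j _ => (hL j).le))
  have hsum_pos : 0 < ∑ i, L i := sum_pos (fun i _ => hL i) ⟨⟨0, hn⟩, mem_univ _⟩
  have hsum_le : ∑ i, L i ≤ 1 := hsub.trans (log_two_lt_d9.le.trans (by norm_num))
  simp_rw [abs_of_nonneg (hq_nonneg _), hq]
  exact sum_one_sub_exp_neg_div_mem_Icc univ L (fun i _ => (hL i).le) hsum_pos hsum_le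
end

section
/- For the logistic loss ℓ(z) = ln(1+e^z), the ratio z ↦ ℓ'(z)²/(ℓ(z)ℓ''(z)) = e^z/ln(1+e^z) is increasing on ℝ. -/
/-! Substituting `y = 1 + e^z`, the ratio becomes `(y - 1) / log y`, the reciprocal of the slope
of the chord of `log` from `1` to `y`. By strict concavity of `log` that slope is strictly
decreasing in `y`, and `y` is strictly increasing in `z`. -/

open Real Set

theorem strictMonoOn_sub_one_div_log : StrictMonoOn (fun y : ℝ => (y - 1) / log y) (Ioi 1) := by
  intro x (hx : 1 < x) y (hy : 1 < y) hxy
  have hslope : log y / (y - 1) < log x / (x - 1) := by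
    simpa only [log_one, sub_zero] using
      strictConcaveOn_log_Ioi.secant_strict_mono (a := 1) (mem_Ioi.mpr one_pos)
        (zero_lt_one.trans hx) (zero_lt_one.trans hy) hx.ne' hy.ne' hxy
  have hpos : 0 < log y / (y - 1) := div_pos (log_pos hy) (sub_pos.mpr hy)
  simpa only [inv_div] using inv_strictAnti₀ hpos hslope

/-- For the logistic loss, the ratio `ℓ'²/(ℓℓ'') = e^z / ln(1+e^z)` is increasing on ℝ. -/
theorem stmt_6 :
    StrictMono (fun z : ℝ => Real.exp z / Real.log (1 + Real.exp z)) := by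
  have hmono : StrictMono fun z : ℝ => 1 + exp z := fun _ _ h =>
    add_lt_add_right (exp_strictMono h) 1
  have hmaps : ∀ z : ℝ, 1 + exp z ∈ Ioi 1 := fun z => lt_add_of_pos_right 1 (exp_pos z)
  intro a b hab
  simpa only [add_sub_cancel_left] using
    strictMonoOn_sub_one_div_log (hmaps a) (hmaps b) (hmono hab)
end

section
/- For the logistic loss ℓ(z) = ln(1+e^z), the function φ(z) := zℓ'(z)/ℓ(z) = z/((1+e^{−z})ln(1+e^z)) is increasing on (−∞, 0). -/
/-!
Write `L = log (1 + eᶻ)`. The denominator `D = (1 + e⁻ᶻ) L` has derivative `1 - e⁻ᶻ L`, because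
`(1 + e⁻ᶻ) · eᶻ / (1 + eᶻ) = 1`, so `φ' = (D - z D') / D²` has numerator `(L - z) + e⁻ᶻ L (1 + z)`.
Since `L > z`, this is positive when `z ≥ -1`; when `z < -1`, the bound `L ≤ eᶻ` gives
`e⁻ᶻ L ≤ 1`, so the numerator is at least `L + 1`. Hence `φ` is strictly increasing on all of `ℝ`.
-/

open Real

noncomputable def logisticPhi (z : ℝ) : ℝ :=
  z / ((1 + exp (-z)) * log (1 + exp z))

lemma log_one_add_exp_pos (z : ℝ) : 0 < log (1 + exp z) :=
  log_pos (lt_add_of_pos_right 1 (exp_pos z))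

lemma lt_log_one_add_exp (z : ℝ) : z < log (1 + exp z) := by
  calc z = log (exp z) := (log_exp z).symm
    _ < log (1 + exp z) := log_lt_log (exp_pos z) (lt_one_add _)

lemma log_one_add_exp_le_exp (z : ℝ) : log (1 + exp z) ≤ exp z := by
  linarith [log_le_sub_one_of_pos (show 0 < 1 + exp z by positivity)]

lemma exp_neg_mul_log_one_add_exp_le_one (z : ℝ) : exp (-z) * log (1 + exp z) ≤ 1 := by
  calc exp (-z) * log (1 + exp z) ≤ exp (-z) * exp z :=
        mul_le_mul_of_nonneg_left (log_one_add_exp_le_exp z) (exp_pos _).le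
    _ = 1 := by rw [← exp_add, neg_add_cancel, exp_zero]

lemma hasDerivAt_one_add_exp_neg_mul_log_one_add_exp (z : ℝ) :
    HasDerivAt (fun z => (1 + exp (-z)) * log (1 + exp z))
      (1 - exp (-z) * log (1 + exp z)) z := by
  have hfst : HasDerivAt (fun z => 1 + exp (-z)) (-exp (-z)) z := by
    simpa using ((hasDerivAt_neg z).exp).const_add 1
  have hsnd : HasDerivAt (fun z => log (1 + exp z)) (exp z / (1 + exp z)) z :=
    ((hasDerivAt_exp z).const_add 1).log (by positivity)
  refine (hfst.mul hsnd).congr_deriv ?_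
  rw [exp_neg]
  field_simp
  ring

lemma logisticPhi_deriv_numerator_pos (z : ℝ) :
    0 < (1 + exp (-z)) * log (1 + exp z) - z * (1 - exp (-z) * log (1 + exp z)) := by
  have hL := log_one_add_exp_pos z
  have hzL := lt_log_one_add_exp z
  have haL : 0 < exp (-z) * log (1 + exp z) := mul_pos (exp_pos _) hL
  rcases le_or_gt (-1) z with hz | hz
  · nlinarith [mul_nonneg haL.le (show 0 ≤ 1 + z by linarith)]
  · nlinarith [mul_le_mul_of_nonpos_right (exp_neg_mul_log_one_add_exp_le_one z)
      (show 1 + z ≤ 0 by linarith)]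

lemma hasDerivAt_logisticPhi (z : ℝ) :
    HasDerivAt logisticPhi
      (((1 + exp (-z)) * log (1 + exp z) - z * (1 - exp (-z) * log (1 + exp z))) /
        ((1 + exp (-z)) * log (1 + exp z)) ^ 2) z := by
  have hD : (1 + exp (-z)) * log (1 + exp z) ≠ 0 := by
    have := log_one_add_exp_pos z
    positivity
  exact ((hasDerivAt_id' z).div (hasDerivAt_one_add_exp_neg_mul_log_one_add_exp z) hD).congr_deriv
    (by rw [one_mul])

theorem strictMono_logisticPhi : StrictMono logisticPhi :=
  strictMono_of_hasDerivAt_pos hasDerivAt_logisticPhi fun z =>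
    div_pos (logisticPhi_deriv_numerator_pos z) (by have := log_one_add_exp_pos z; positivity)

/-- For the logistic loss, `φ(z) = zℓ'(z)/ℓ(z) = z / ((1+e^{−z}) ln(1+e^z))`
is increasing on `(−∞, 0)`. -/
theorem stmt_7 :
    StrictMonoOn (fun z : ℝ => z / ((1 + Real.exp (-z)) * Real.log (1 + Real.exp z)))
      (Set.Iio 0) :=
  strictMono_logisticPhi.strictMonoOn _
end

section
/- Let f : ℝⁿ → ℝ be convex and differentiable, ψ* convex with generalized Bregman distance D_{ψ*}. Suppose p_{t+1} = p_t − η ∇f(q_t) with q_t = ∇ψ(p_t), q_{t+1} = ∇ψ(p_{t+1}) and η > 0. Then for every q in the domain of ψ*, η(f(q_t) − f(q)) ≤ ⟨η∇f(q_t), q_t − q_{t+1}⟩ − D_{ψ*}(q_{t+1}, q_t) + D_{ψ*}(q, q_t) − D_{ψ*}(q, q_{t+1}). -/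
open scoped RealInnerProductSpace

/-! The gradient inequality for `f` at `q₀` bounds `η (f q₀ - f q)` by `⟪η ∇f(q₀), q₀ - q⟫`, and
the three-point identity of the Bregman distance rewrites `⟪η ∇f(q₀), q₁ - q⟫ = ⟪p₀ - p₁, q₁ - q⟫`
as `D(q, q₀) - D(q, q₁) - D(q₁, q₀)`. -/

/-- Restricting `f` to the segment `[x, y]` reduces this to the one-dimensional fact that the
derivative at the left endpoint is at most the slope of the secant. -/
theorem ConvexOn.hasFDerivAt_le_sub {E : Type*} [NormedAddCommGroup E] [NormedSpace ℝ E]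
    {f : E → ℝ} {f' : E →L[ℝ] ℝ} {s : Set E} {x y : E}
    (hf : ConvexOn ℝ s f) (hx : x ∈ s) (hy : y ∈ s) (hf' : HasFDerivAt f f' x) :
    f' (y - x) ≤ f y - f x := by
  set ℓ : ℝ →ᵃ[ℝ] E := AffineMap.lineMap x y
  have hconv : ConvexOn ℝ (ℓ ⁻¹' s) (f ∘ ℓ) := hf.comp_affineMap ℓ
  have hderiv : HasDerivAt (f ∘ ℓ) (f' (y - x)) 0 := by
    have hf'0 : HasFDerivAt f f' (ℓ 0) := by rwa [AffineMap.lineMap_apply_zero]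
    exact hf'0.comp_hasDerivAt 0 AffineMap.hasDerivAt_lineMap
  have h0 : (0 : ℝ) ∈ ℓ ⁻¹' s := by simpa [ℓ] using hx
  have h1 : (1 : ℝ) ∈ ℓ ⁻¹' s := by simpa [ℓ] using hy
  simpa [ℓ, slope_def_field] using hconv.le_slope_of_hasDerivAt h0 h1 one_pos hderiv

theorem ConvexOn.inner_gradient_le_sub {F : Type*} [NormedAddCommGroup F] [InnerProductSpace ℝ F]
    [CompleteSpace F] {f : F → ℝ} {g : F} {s : Set F} {x y : F}
    (hf : ConvexOn ℝ s f) (hx : x ∈ s) (hy : y ∈ s) (hg : HasGradientAt f g x) :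
    ⟪g, y - x⟫ ≤ f y - f x :=
  hf.hasFDerivAt_le_sub hx hy hg.hasFDerivAt

theorem bregman_three_point {F : Type*} [NormedAddCommGroup F] [InnerProductSpace ℝ F]
    (ψs : F → ℝ) (gψ : F → F) (D : F → F → ℝ)
    (hD : ∀ q p, D q p = ψs q - ψs (gψ p) - ⟪p, q - gψ p⟫) (p₀ p₁ q : F) :
    ⟪p₀ - p₁, gψ p₁ - q⟫ = D q p₀ - D q p₁ - D (gψ p₁) p₀ := by
  simp only [hD, inner_sub_left, inner_sub_right]
  ring

theorem stmt_10_general {n : ℕ}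
    (f ψs : EuclideanSpace ℝ (Fin n) → ℝ)
    (gf gψ : EuclideanSpace ℝ (Fin n) → EuclideanSpace ℝ (Fin n))
    (hfconv : ConvexOn ℝ Set.univ f)
    (hgf : ∀ x, HasGradientAt f (gf x) x)
    (D : EuclideanSpace ℝ (Fin n) → EuclideanSpace ℝ (Fin n) → ℝ)
    (hD : ∀ q p, D q p = ψs q - ψs (gψ p) - ⟪p, q - gψ p⟫)
    (η : ℝ) (hη : 0 < η)
    (p₀ p₁ : EuclideanSpace ℝ (Fin n))
    (hstep : p₁ = p₀ - η • gf (gψ p₀)) :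
    ∀ q : EuclideanSpace ℝ (Fin n),
      η * (f (gψ p₀) - f q)
        ≤ ⟪η • gf (gψ p₀), gψ p₀ - gψ p₁⟫ - D (gψ p₁) p₀ + D q p₀ - D q p₁ := by
  intro q
  have hgrad : f (gψ p₀) - f q ≤ ⟪gf (gψ p₀), gψ p₀ - q⟫ := by
    have := hfconv.inner_gradient_le_sub (Set.mem_univ _) (Set.mem_univ q) (hgf (gψ p₀))
    rw [← neg_sub q (gψ p₀), inner_neg_right]
    linarith
  have hthree := bregman_three_point ψs gψ D hD p₀ p₁ q
  rw [show p₀ - p₁ = η • gf (gψ p₀) by rw [hstep, sub_sub_cancel]] at hthree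
  calc η * (f (gψ p₀) - f q)
      ≤ η * ⟪gf (gψ p₀), gψ p₀ - q⟫ := mul_le_mul_of_nonneg_left hgrad hη.le
    _ = ⟪η • gf (gψ p₀), gψ p₀ - gψ p₁⟫ + ⟪η • gf (gψ p₀), gψ p₁ - q⟫ := by
      rw [← inner_add_right, sub_add_sub_cancel, real_inner_smul_left]
    _ = _ := by rw [hthree]; ring

/-- Mirror descent step inequality: for convex differentiable `f`, a mirror map `ψ`
with gradient `gψ` and conjugate `ψs`, generalized Bregman distance
`D q p = ψs q − ψs (gψ p) − ⟨p, q − gψ p⟩`, and the update `p₁ = p₀ − η ∇f(q₀)` with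
`q₀ = ∇ψ(p₀)`, `q₁ = ∇ψ(p₁)`: for every `q`,
`η(f(q₀) − f(q)) ≤ ⟨η∇f(q₀), q₀ − q₁⟩ − D(q₁, q₀) + D(q, q₀) − D(q, q₁)`. -/
theorem stmt_10 {n : ℕ}
    (f ψ ψs : EuclideanSpace ℝ (Fin n) → ℝ)
    (gf gψ : EuclideanSpace ℝ (Fin n) → EuclideanSpace ℝ (Fin n))
    (hfconv : ConvexOn ℝ Set.univ f)
    (hgf : ∀ x, HasGradientAt f (gf x) x)
    (hgψ : ∀ p, HasGradientAt ψ (gψ p) p)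
    (D : EuclideanSpace ℝ (Fin n) → EuclideanSpace ℝ (Fin n) → ℝ)
    (hD : ∀ q p, D q p = ψs q - ψs (gψ p) - ⟪p, q - gψ p⟫)
    (η : ℝ) (hη : 0 < η)
    (p₀ p₁ : EuclideanSpace ℝ (Fin n))
    (hstep : p₁ = p₀ - η • gf (gψ p₀)) :
    ∀ q : EuclideanSpace ℝ (Fin n),
      η * (f (gψ p₀) - f q)
        ≤ ⟪η • gf (gψ p₀), gψ p₀ - gψ p₁⟫ - D (gψ p₁) p₀ + D q p₀ - D q p₁ :=
  stmt_10_general f ψs gf gψ hfconv hgf D hD η hη p₀ p₁ hstep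
end

section
/- Let ℓ be positive, increasing, differentiable with ℓ', ℓ'' > 0, and define ψ(ξ) := ℓ^{-1}(∑_{i=1}^n ℓ(ξ_i)). Suppose σ(s) := ℓ'(ℓ^{-1}(s)) ℓ^{-1}(s) satisfies lim_{s→0⁺} σ(s) = 0 and σ(s)/s is increasing on (0, ℓ(0)). Then for any ξ ∈ ℝⁿ with ψ(ξ) ≤ 0, we have ψ*(∇ψ(ξ)) ≤ 0, where ψ*(q) = sup_ξ (⟨q,ξ⟩ − ψ(ξ)) and ∇ψ(ξ)_i = ℓ'(ξ_i)/ℓ'(ψ(ξ)). Equivalently, ∑_i ℓ'(ξ_i)ξ_i ≤ ℓ'(ψ(ξ))ψ(ξ). -/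
/-- For a positive increasing loss `ℓ` with `ℓ', ℓ'' > 0` and smoothed margin `ψ`
(defined by `ℓ(ψ(ξ)) = ∑ᵢ ℓ(ξᵢ)`), if `σ(s) = ℓ'(ℓ⁻¹(s))·ℓ⁻¹(s)` (i.e. `σ(ℓ(z)) = ℓ'(z)z`)
satisfies `σ(s) → 0` as `s → 0⁺` and `σ(s)/s` increasing on `(0, ℓ(0))`, then `ψ(ξ) ≤ 0`
implies `ψ*(∇ψ(ξ)) ≤ 0`, equivalently `∑ᵢ ℓ'(ξᵢ)ξᵢ ≤ ℓ'(ψ(ξ))ψ(ξ)`. -/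
theorem stmt_14 {n : ℕ} (ℓ : ℝ → ℝ) (σ : ℝ → ℝ) (ψ : (Fin n → ℝ) → ℝ)
    (hpos : ∀ z, 0 < ℓ z) (hmono : StrictMono ℓ)
    (hdiff : ∀ z, DifferentiableAt ℝ ℓ z)
    (hd1 : ∀ z, 0 < deriv ℓ z)
    (hd2 : ∀ z, 0 < deriv (deriv ℓ) z)
    (hψ : ∀ ξ : Fin n → ℝ, ℓ (ψ ξ) = ∑ i, ℓ (ξ i))
    (hσ : ∀ z, σ (ℓ z) = deriv ℓ z * z)
    (hσlim : Filter.Tendsto σ (nhdsWithin 0 (Set.Ioi 0)) (nhds 0))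
    (hσmono : MonotoneOn (fun s => σ s / s) (Set.Ioo 0 (ℓ 0))) :
    ∀ ξ : Fin n → ℝ, ψ ξ ≤ 0 →
      ∑ i, deriv ℓ (ξ i) * ξ i ≤ deriv ℓ (ψ ξ) * ψ ξ := by
  intro ξ hξ
  have key : ∀ i, ℓ (ξ i) ≤ ℓ (ψ ξ) := by
    intro i
    rw [hψ]
    exact Finset.single_le_sum (fun j _ => (hpos (ξ j)).le) (Finset.mem_univ i)
  rcases eq_or_lt_of_le hξ with h0 | h0
  · have hterm : ∀ i, deriv ℓ (ξ i) * ξ i ≤ 0 := by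
      intro i
      have hxi : ξ i ≤ 0 := by
        have h := key i
        rw [h0] at h
        exact hmono.le_iff_le.mp h
      exact mul_nonpos_of_nonneg_of_nonpos (hd1 _).le hxi
    calc ∑ i, deriv ℓ (ξ i) * ξ i ≤ 0 :=
          Finset.sum_nonpos (fun i _ => hterm i)
      _ = deriv ℓ (ψ ξ) * ψ ξ := by rw [h0]; ring
  · have hS : ℓ (ψ ξ) < ℓ 0 := hmono h0
    have hSpos : 0 < ℓ (ψ ξ) := hpos _
    have hSmem : ℓ (ψ ξ) ∈ Set.Ioo 0 (ℓ 0) := ⟨hSpos, hS⟩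
    have hterm : ∀ i, deriv ℓ (ξ i) * ξ i ≤ ℓ (ξ i) * (σ (ℓ (ψ ξ)) / ℓ (ψ ξ)) := by
      intro i
      have hmem : ℓ (ξ i) ∈ Set.Ioo 0 (ℓ 0) := ⟨hpos _, lt_of_le_of_lt (key i) hS⟩
      have hm := hσmono hmem hSmem (key i)
      simp only at hm
      have h2 : σ (ℓ (ξ i)) ≤ σ (ℓ (ψ ξ)) / ℓ (ψ ξ) * ℓ (ξ i) :=
        (div_le_iff₀ hmem.1).mp hm
      rw [hσ] at h2
      linarith
    calc ∑ i, deriv ℓ (ξ i) * ξ i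
        ≤ ∑ i, ℓ (ξ i) * (σ (ℓ (ψ ξ)) / ℓ (ψ ξ)) :=
          Finset.sum_le_sum (fun i _ => hterm i)
      _ = (∑ i, ℓ (ξ i)) * (σ (ℓ (ψ ξ)) / ℓ (ψ ξ)) := by rw [Finset.sum_mul]
      _ = σ (ℓ (ψ ξ)) := by rw [← hψ]; field_simp
      _ = deriv ℓ (ψ ξ) * ψ ξ := hσ _
end

section
/- For ℓ ∈ {exp, logistic} and v ∈ ℝⁿ with all coordinates v_i < 0, define the perspective g(r) := r·ℓ^{-1}(∑_{i=1}^n ℓ(v_i/r)) for r > 0. Then g is nondecreasing in r and lim_{r→0⁺} g(r) = max_i v_i. -/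
/-!
For `0 < a ≤ b`, `exp (w / a) = exp (w / b) ^ (b / a)`, so the superadditivity
`∑ xᵢ ^ p ≤ (∑ xᵢ) ^ p` (`xᵢ ≥ 0`, `p ≥ 1`) makes `r log ∑ᵢ exp (wᵢ / r)` nondecreasing;
it is squeezed between `maxᵢ wᵢ` and `maxᵢ wᵢ + r log n`, which gives the limit.
The logistic case is the same function for other weights: expanding the product,
`exp (∑ᵢ log (1 + exp (vᵢ / r))) - 1 = ∑_{T ≠ ∅} exp (v(T) / r)` with `v(T) = ∑_{i ∈ T} vᵢ`,
and since all `vᵢ < 0` the largest subset sum `v(T)` is `maxᵢ vᵢ`.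
-/

open Finset Filter Real Set Topology

theorem Real.sum_rpow_le_rpow_sum {ι : Type*} (s : Finset ι) {a : ι → ℝ}
    (ha : ∀ i ∈ s, 0 ≤ a i) {p : ℝ} (hp : 1 ≤ p) :
    ∑ i ∈ s, a i ^ p ≤ (∑ i ∈ s, a i) ^ p := by
  have hp' : 1 + (p - 1) ≠ 0 := by linarith
  calc ∑ i ∈ s, a i ^ p = ∑ i ∈ s, a i * a i ^ (p - 1) :=
        sum_congr rfl fun i hi => by rw [← rpow_one_add' (ha i hi) hp', add_sub_cancel]
    _ ≤ ∑ i ∈ s, a i * (∑ j ∈ s, a j) ^ (p - 1) :=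
        sum_le_sum fun i hi => mul_le_mul_of_nonneg_left
          (rpow_le_rpow (ha i hi) (single_le_sum ha hi) (by linarith)) (ha i hi)
    _ = (∑ i ∈ s, a i) ^ p := by
        rw [← sum_mul, ← rpow_one_add' (sum_nonneg ha) hp', add_sub_cancel]

noncomputable def logSumExpPerspective {ι : Type*} (s : Finset ι) (w : ι → ℝ) (r : ℝ) : ℝ :=
  r * log (∑ i ∈ s, exp (w i / r))

section logSumExpPerspective

variable {ι : Type*} {s : Finset ι} (w : ι → ℝ)

lemma sum_exp_div_pos (hs : s.Nonempty) (r : ℝ) : 0 < ∑ i ∈ s, exp (w i / r) :=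
  sum_pos (fun _ _ => exp_pos _) hs

theorem logSumExpPerspective_monotoneOn (hs : s.Nonempty) :
    MonotoneOn (logSumExpPerspective s w) (Ioi 0) := by
  intro a (ha : 0 < a) b (hb : 0 < b) hab
  have hsum : ∑ i ∈ s, exp (w i / a) ≤ (∑ i ∈ s, exp (w i / b)) ^ (b / a) :=
    calc ∑ i ∈ s, exp (w i / a) = ∑ i ∈ s, exp (w i / b) ^ (b / a) :=
          sum_congr rfl fun _ _ => by rw [← exp_mul]; field_simp
      _ ≤ _ := sum_rpow_le_rpow_sum s (fun i _ => (exp_pos _).le) ((one_le_div ha).2 hab)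
  calc a * log (∑ i ∈ s, exp (w i / a))
      ≤ a * log ((∑ i ∈ s, exp (w i / b)) ^ (b / a)) :=
        mul_le_mul_of_nonneg_left (log_le_log (sum_exp_div_pos w hs a) hsum) ha.le
    _ = b * log (∑ i ∈ s, exp (w i / b)) := by
        rw [log_rpow (sum_exp_div_pos w hs b)]; field_simp

theorem le_logSumExpPerspective {i : ι} (hi : i ∈ s) {r : ℝ} (hr : 0 < r) :
    w i ≤ logSumExpPerspective s w r := by
  have : w i / r ≤ log (∑ j ∈ s, exp (w j / r)) :=
    (le_log_iff_exp_le (sum_exp_div_pos w ⟨i, hi⟩ r)).2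
      (single_le_sum (f := fun j => exp (w j / r)) (fun j _ => (exp_pos _).le) hi)
  calc w i = r * (w i / r) := by field_simp
    _ ≤ _ := mul_le_mul_of_nonneg_left this hr.le

theorem logSumExpPerspective_le_sup'_add (hs : s.Nonempty) {r : ℝ} (hr : 0 < r) :
    logSumExpPerspective s w r ≤ s.sup' hs w + r * log #s := by
  have hsum : ∑ i ∈ s, exp (w i / r) ≤ #s * exp (s.sup' hs w / r) := by
    rw [← nsmul_eq_mul, ← sum_const]
    exact sum_le_sum fun i hi => exp_le_exp.2 (by gcongr; exact le_sup' w hi)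
  have hlog : log (∑ i ∈ s, exp (w i / r)) ≤ log #s + s.sup' hs w / r := by
    calc log (∑ i ∈ s, exp (w i / r)) ≤ log (#s * exp (s.sup' hs w / r)) :=
          log_le_log (sum_exp_div_pos w hs r) hsum
      _ = log #s + s.sup' hs w / r := by
          rw [log_mul (by simpa using hs.ne_empty) (exp_ne_zero _), log_exp]
  calc r * log (∑ i ∈ s, exp (w i / r)) ≤ r * (log #s + s.sup' hs w / r) :=
        mul_le_mul_of_nonneg_left hlog hr.le
    _ = s.sup' hs w + r * log #s := by field_simp; ring

theorem tendsto_logSumExpPerspective_nhdsGT_zero (hs : s.Nonempty) :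
    Tendsto (logSumExpPerspective s w) (𝓝[>] 0) (𝓝 (s.sup' hs w)) := by
  obtain ⟨i, hi, hmax⟩ := exists_mem_eq_sup' hs w
  have hupper : Tendsto (fun r => s.sup' hs w + r * log #s) (𝓝[>] 0) (𝓝 (s.sup' hs w)) :=
    tendsto_nhdsWithin_of_tendsto_nhds <|
      (continuous_const.add (continuous_id.mul continuous_const)).tendsto' 0 _ (by simp)
  refine tendsto_of_tendsto_of_tendsto_of_le_of_le' tendsto_const_nhds hupper ?_ ?_
  · exact eventually_nhdsWithin_of_forall fun r hr => hmax ▸ le_logSumExpPerspective w hi hr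
  · exact eventually_nhdsWithin_of_forall fun r hr => logSumExpPerspective_le_sup'_add w hs hr

end logSumExpPerspective

theorem Real.exp_sum_log_one_add_exp_sub_one {ι : Type*} [DecidableEq ι] (s : Finset ι)
    (x : ι → ℝ) :
    exp (∑ i ∈ s, log (1 + exp (x i))) - 1 = ∑ t ∈ s.powerset.erase ∅, exp (∑ i ∈ t, x i) := by
  rw [exp_sum, prod_congr rfl fun i _ => exp_log (by positivity), prod_one_add,
    ← add_sum_erase _ _ (empty_mem_powerset s)]
  simp [exp_sum]

theorem Finset.sup'_sum_powerset_erase_empty {ι : Type*} [DecidableEq ι] {s : Finset ι}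
    (hs : s.Nonempty) (hS : (s.powerset.erase ∅).Nonempty) {v : ι → ℝ}
    (hv : ∀ i ∈ s, v i ≤ 0) :
    (s.powerset.erase ∅).sup' hS (fun t => ∑ i ∈ t, v i) = s.sup' hs v := by
  refine le_antisymm (sup'_le _ _ fun t ht => ?_) (sup'_le _ _ fun i hi => ?_)
  · obtain ⟨hne, hts⟩ := mem_erase.1 ht
    obtain ⟨i, hi⟩ := nonempty_iff_ne_empty.2 hne
    rw [← add_sum_erase t v hi]
    have hrest : ∑ k ∈ t.erase i, v k ≤ 0 :=
      sum_nonpos fun k hk => hv k (mem_powerset.1 hts (mem_of_mem_erase hk))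
    linarith [le_sup' v (mem_powerset.1 hts hi)]
  · have hi' : {i} ∈ s.powerset.erase ∅ := by simpa using hi
    simpa only [sum_singleton] using le_sup' (fun t => ∑ i ∈ t, v i) hi'

/-- For the exponential and logistic losses, with all `vᵢ < 0`, the perspective
`g(r) = r·ℓ⁻¹(∑ᵢ ℓ(vᵢ/r))` is nondecreasing on `(0,∞)` and tends to `maxᵢ vᵢ`
as `r → 0⁺`. -/
theorem stmt_16 {n : ℕ} [NeZero n] (v : Fin n → ℝ) (hv : ∀ i, v i < 0) :
    let gexp : ℝ → ℝ := fun r => r * Real.log (∑ i, Real.exp (v i / r))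
    let glog : ℝ → ℝ := fun r =>
      r * Real.log (Real.exp (∑ i, Real.log (1 + Real.exp (v i / r))) - 1)
    let M : ℝ := Finset.univ.sup' Finset.univ_nonempty v
    (MonotoneOn gexp (Set.Ioi 0) ∧
      Filter.Tendsto gexp (nhdsWithin 0 (Set.Ioi 0)) (nhds M)) ∧
    (MonotoneOn glog (Set.Ioi 0) ∧
      Filter.Tendsto glog (nhdsWithin 0 (Set.Ioi 0)) (nhds M)) := by
  intro gexp glog M
  set S : Finset (Finset (Fin n)) := univ.powerset.erase ∅
  have hS : S.Nonempty := ⟨{0}, by simp [S]⟩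
  have hglog : glog = logSumExpPerspective S (fun t => ∑ i ∈ t, v i) := funext fun r => by
    simp only [glog, exp_sum_log_one_add_exp_sub_one, sum_div, logSumExpPerspective, S]
  have hM : M = S.sup' hS (fun t => ∑ i ∈ t, v i) :=
    (sup'_sum_powerset_erase_empty univ_nonempty hS fun i _ => (hv i).le).symm
  refine ⟨⟨logSumExpPerspective_monotoneOn v univ_nonempty,
    tendsto_logSumExpPerspective_nhdsGT_zero v univ_nonempty⟩, ?_⟩
  rw [hglog, hM]
  exact ⟨logSumExpPerspective_monotoneOn _ hS, tendsto_logSumExpPerspective_nhdsGT_zero _ hS⟩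
end

section
/- Consider the dataset in ℝ² with z₁ = (0.1, 0) and z₂ = ⋯ = z_n = (0.2, 0.2), with risk R(w) = (1/n)∑_i exp(⟨w, z_i⟩). Run gradient descent w_{t+1} = w_t − η_t ∇R(w_t) from w₀ = (0,0) with any positive step sizes η_t. Then for all t, both coordinates of w_t are nonpositive, and at the first step τ at which R(w_τ) < 2/n, the second coordinate satisfies |w_{τ,2}| ≥ ln(n/2). -/
set_option maxHeartbeats 1000000 in
/-- For the dataset `z₁ = (0.1, 0)`, `z₂ = ⋯ = z_n = (0.2, 0.2)` and risk
`R(w) = (1/n)(e^{0.1w₁} + (n−1)e^{0.2(w₁+w₂)})`, gradient descent from `w₀ = 0` with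
any positive step sizes keeps both coordinates nonpositive, and at the first step `τ`
with `R(w_τ) < 2/n`, one has `|w_{τ,2}| ≥ ln(n/2)`. -/
theorem stmt_19 (n : ℕ) (hn : 2 ≤ n)
    (R : ℝ × ℝ → ℝ)
    (hR : ∀ w : ℝ × ℝ, R w = (1 / n) *
      (Real.exp (0.1 * w.1) + (n - 1) * Real.exp (0.2 * (w.1 + w.2))))
    (G : ℝ × ℝ → ℝ × ℝ)
    (hG : ∀ w : ℝ × ℝ, G w =
      (0.1 * (1 / n) * Real.exp (0.1 * w.1)
          + 0.2 * ((n - 1) / n) * Real.exp (0.2 * (w.1 + w.2)),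
        0.2 * ((n - 1) / n) * Real.exp (0.2 * (w.1 + w.2))))
    (η : ℕ → ℝ) (hη : ∀ t, 0 < η t)
    (w : ℕ → ℝ × ℝ) (hw0 : w 0 = (0, 0))
    (hstep : ∀ t, w (t + 1) = w t - η t • G (w t))
    (τ : ℕ) (hτ : R (w τ) < 2 / n) (hτfirst : ∀ t < τ, 2 / n ≤ R (w t)) :
    (∀ t, (w t).1 ≤ 0 ∧ (w t).2 ≤ 0) ∧ Real.log (n / 2) ≤ |(w τ).2| := by
  have hn0 : (0:ℝ) < n := by positivity
  have hn1 : (0:ℝ) < (n:ℝ) - 1 := by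
    have : (2:ℝ) ≤ n := by exact_mod_cast hn
    linarith
  have hfrac : (0:ℝ) < ((n:ℝ) - 1) / n := div_pos hn1 hn0
  have hGpos : ∀ v : ℝ × ℝ, 0 < (G v).1 ∧ 0 < (G v).2 := by
    intro v
    rw [hG]
    constructor
    · exact add_pos (by positivity) (mul_pos (mul_pos (by norm_num) hfrac) (Real.exp_pos _))
    · exact mul_pos (mul_pos (by norm_num) hfrac) (Real.exp_pos _)
  have hstep1 : ∀ t, (w (t+1)).1 = (w t).1 - η t * (G (w t)).1 := by
    intro t; rw [hstep]; rfl
  have hstep2 : ∀ t, (w (t+1)).2 = (w t).2 - η t * (G (w t)).2 := by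
    intro t; rw [hstep]; rfl
  have hnonpos : ∀ t, (w t).1 ≤ 0 ∧ (w t).2 ≤ 0 := by
    intro t
    induction t with
    | zero => rw [hw0]; exact ⟨le_refl 0, le_refl 0⟩
    | succ t ih =>
      have h1 := hstep1 t
      have h2 := hstep2 t
      have hp := hGpos (w t)
      have hpos1 : 0 < η t * (G (w t)).1 := mul_pos (hη t) hp.1
      have hpos2 : 0 < η t * (G (w t)).2 := mul_pos (hη t) hp.2
      constructor
      · rw [h1]; linarith [ih.1]
      · rw [h2]; linarith [ih.2]
  have hkey : ∀ t, t ≤ τ → 2 * (w t).2 ≤ (w t).1 := by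
    intro t
    induction t with
    | zero => intro _; rw [hw0]; norm_num
    | succ t ih =>
      intro ht
      have htτ : t < τ := Nat.lt_of_succ_le ht
      have ih' := ih (Nat.le_of_lt htτ)
      have hRt := hτfirst t htτ
      rw [hR] at hRt
      set E1 := Real.exp (0.1 * (w t).1) with hE1
      set E2 := Real.exp (0.2 * ((w t).1 + (w t).2)) with hE2
      have hE1le : E1 ≤ 1 := Real.exp_le_one_iff.mpr (by nlinarith [(hnonpos t).1])
      have hsum : 2 ≤ E1 + ((n:ℝ) - 1) * E2 := by
        have := mul_le_mul_of_nonneg_left hRt (le_of_lt hn0)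
        rw [mul_comm] at this
        field_simp at this
        linarith
      have hE1E2 : E1 ≤ 2 * (((n:ℝ) - 1) * E2) := by linarith
      have hG12 : (G (w t)).1 ≤ 2 * (G (w t)).2 := by
        rw [hG]
        simp only
        have h' : E1 * (1/(n:ℝ)) ≤ 2 * (((n:ℝ)-1) * E2) * (1/(n:ℝ)) :=
          mul_le_mul_of_nonneg_right hE1E2 (by positivity)
        have hdiv : ((n:ℝ)-1)/(n:ℝ) = ((n:ℝ)-1) * (1/(n:ℝ)) := by ring
        rw [hdiv, ← hE1, ← hE2]
        linarith [h']
      rw [hstep1 t, hstep2 t]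
      nlinarith [mul_le_mul_of_nonneg_left hG12 (le_of_lt (hη t))]
  refine ⟨hnonpos, ?_⟩
  -- final part
  have hw2 : (w τ).2 ≤ 0 := (hnonpos τ).2
  set a : ℝ := -(w τ).2 with ha
  have ha0 : 0 ≤ a := by linarith
  have habs : |(w τ).2| = a := abs_of_nonpos hw2
  rw [habs]
  have hb : -2 * a ≤ (w τ).1 := by have := hkey τ le_rfl; linarith
  rw [hR] at hτ
  set E1 := Real.exp (0.1 * (w τ).1) with hE1
  clear_value E1
  set E2 := Real.exp (0.2 * ((w τ).1 + (w τ).2)) with hE2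
  clear_value E2
  have hsum : E1 + ((n:ℝ) - 1) * E2 < 2 := by
    have := mul_lt_mul_of_pos_left hτ hn0
    rw [mul_comm] at this
    field_simp at this
    linarith
  set u : ℝ := Real.exp (0.2 * a) with hu
  clear_value u
  have hu1 : 1 ≤ u := hu ▸ Real.one_le_exp (by positivity)
  have hE1u : 1 ≤ E1 * u := by
    rw [hE1, hu, ← Real.exp_add]
    apply Real.one_le_exp
    nlinarith
  have hu3 : u^3 = Real.exp (0.6 * a) := by
    rw [hu, ← Real.exp_nat_mul]
    norm_num
    ring
  have hE2u : 1 ≤ E2 * u^3 := by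
    rw [hE2, hu3, ← Real.exp_add]
    apply Real.one_le_exp
    nlinarith
  have hE1pos : 0 < E1 := hE1 ▸ Real.exp_pos _
  have hE2pos : 0 < E2 := hE2 ▸ Real.exp_pos _
  have hupos : 0 < u := by linarith
  -- n - 1 + u^2 < 2 u^3
  have hA : u^2 ≤ E1 * u * u^2 := le_mul_of_one_le_left (sq_nonneg u) hE1u
  have hB : (n:ℝ) - 1 ≤ ((n:ℝ)-1) * (E2 * u^3) :=
    le_mul_of_one_le_right (le_of_lt hn1) hE2u
  have hC : (E1 + ((n:ℝ)-1) * E2) * u^3 < 2 * u^3 :=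
    mul_lt_mul_of_pos_right hsum (pow_pos hupos 3)
  have h1 : (n:ℝ) - 1 + u^2 < 2 * u^3 := by nlinarith [hA, hB, hC]
  have hu2 : 1 ≤ u^2 := by nlinarith
  have hu3' : (1:ℝ) ≤ 2 * u^3 := by
    nlinarith [mul_le_mul_of_nonneg_right hu2 (le_of_lt hupos)]
  have h2 : (n:ℝ) < 2 * u^5 := by
    nlinarith [mul_nonneg (sub_nonneg.mpr hu2) (sub_nonneg.mpr hu3')]
  have hua : u^5 = Real.exp a := by
    rw [hu, ← Real.exp_nat_mul]
    norm_num
    ring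
  have hfin : (n:ℝ)/2 ≤ Real.exp a := by rw [← hua]; linarith
  calc Real.log ((n:ℝ)/2) ≤ Real.log (Real.exp a) :=
        Real.log_le_log (by positivity) hfin
    _ = a := Real.log_exp a
end
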